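/- arXiv:2012.15272 — 5 statements merged into one kernel-verified Lean document; each statement's English description precedes it below -/
import Mathlib

section
/- Let Q be an antisymmetric r×r integer matrix and Λ ⊆ ℤ^r a submonoid that is finitely generated as an ℕ-module. Then the monomial subalgebra A(Q;Λ) ⊆ T(Q), defined as the R-span of the normalized monomials {x^k : k ∈ Λ}, is a subalgebra of T(Q) and is a Noetherian domain. -/
/-!
The monomials form a twisted group algebra, `x k * x k' = c k k' • x (k + k')` with unit
scalars, so each `x g` is a unit of `T` and conjugation by it only rescales monomials. If `Λ'` is
generated by `Λ` and `g`, every element of `A(Λ')` is a sum `∑ aᵢ (x g)ⁱ` with `aᵢ ∈ A(Λ)`, and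
`x g * a = σ a * x g` for the automorphism `σ` of `A(Λ)` given by conjugation; thus `A(Λ')` is a
quotient of the skew polynomial ring `A(Λ)[y; σ]`. The Hilbert basis theorem argument with
leading-coefficient ideals `Lₙ` goes through for such rings, once one notices that `σ⁻ⁿ Lₙ`
is an ascending chain. Induction on the generators of `Λ`, starting from `A(0)`, the image of
`R`, shows `A(Λ)` Noetherian; it is a domain as a subring of `T`.
-/

open Finset Submodule

section SkewGenerated

variable {A B : Type*} [Ring A] [Ring B] (f : A →+* B) (y : B)

/-- The image in `B` of the skew polynomials over `A`, when `y * f a = f (σ a) * y`. -/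
def skewSpan : AddSubmonoid B where
  carrier := {b | ∃ (n : ℕ) (c : ℕ → A), b = ∑ i ∈ range n, f (c i) * y ^ i}
  zero_mem' := ⟨0, 0, by simp⟩
  add_mem' := by
    rintro _ _ ⟨n₁, c₁, rfl⟩ ⟨n₂, c₂, rfl⟩
    have pad : ∀ {n₀ n : ℕ} (c : ℕ → A), n₀ ≤ n → ∑ i ∈ range n₀, f (c i) * y ^ i =
        ∑ i ∈ range n, f (if i < n₀ then c i else 0) * y ^ i := fun {n₀ n} c h => by
      rw [← sum_range_add_sum_Ico (fun i => f (if i < n₀ then c i else 0) * y ^ i) h,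
        sum_eq_zero (s := Ico n₀ n) fun i hi => by simp [not_lt.2 (mem_Ico.1 hi).1],
        add_zero]
      exact sum_congr rfl fun i hi => by rw [if_pos (mem_range.1 hi)]
    refine ⟨max n₁ n₂, fun i => (if i < n₁ then c₁ i else 0) + (if i < n₂ then c₂ i else 0), ?_⟩
    simp only [map_add, add_mul, sum_add_distrib]
    rw [pad c₁ (le_max_left n₁ n₂), pad c₂ (le_max_right n₁ n₂)]

def leadingCoeffIdeal (I : Ideal B) (n : ℕ) : Ideal A where
  carrier := {a | ∃ c : ℕ → A, c n = a ∧ ∑ i ∈ range (n + 1), f (c i) * y ^ i ∈ I}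
  zero_mem' := ⟨0, rfl, by simp⟩
  add_mem' := by
    rintro _ _ ⟨c, rfl, hc⟩ ⟨c', rfl, hc'⟩
    refine ⟨c + c', rfl, ?_⟩
    simpa only [Pi.add_apply, map_add, add_mul, sum_add_distrib] using I.add_mem hc hc'
  smul_mem' := by
    rintro a _ ⟨c, rfl, hc⟩
    refine ⟨fun i => a * c i, rfl, ?_⟩
    simpa only [mul_sum, map_mul, mul_assoc] using I.mul_mem_left (f a) hc

theorem pow_mem_skewSpan (n : ℕ) : y ^ n ∈ skewSpan f y :=
  ⟨n + 1, fun i => if i = n then 1 else 0, by simp⟩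

variable {f y}

theorem mul_mem_skewSpan (a : A) {b : B} (hb : b ∈ skewSpan f y) : f a * b ∈ skewSpan f y := by
  obtain ⟨n, c, rfl⟩ := hb
  exact ⟨n, fun i => a * c i, by simp only [mul_sum, map_mul, mul_assoc]⟩

variable {I J : Ideal B} {n : ℕ}

theorem leadingCoeffIdeal_mono (h : I ≤ J) :
    leadingCoeffIdeal f y I n ≤ leadingCoeffIdeal f y J n :=
  fun _ ⟨c, hcn, hc⟩ => ⟨c, hcn, h hc⟩

theorem le_of_leadingCoeffIdeal_le (hJI : J ≤ I)
    (hIJ : ∀ n, leadingCoeffIdeal f y I n ≤ leadingCoeffIdeal f y J n)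
    (hgen : ∀ b, b ∈ skewSpan f y) : I ≤ J := by
  intro b hb
  obtain ⟨n, c, rfl⟩ := hgen b
  induction n generalizing c with
  | zero => simp
  | succ n ih =>
    obtain ⟨c', hc'n, hc'⟩ := hIJ n ⟨c, rfl, hb⟩
    have hsub : ∑ i ∈ range (n + 1), f (c i) * y ^ i - ∑ i ∈ range (n + 1), f (c' i) * y ^ i =
        ∑ i ∈ range n, f ((c - c') i) * y ^ i := by
      rw [← sum_sub_distrib, sum_range_succ, hc'n]
      simp only [Pi.sub_apply, map_sub, sub_mul, sub_self, add_zero]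
    have hdiff := ih (c - c') (hsub ▸ I.sub_mem hb (hJI hc'))
    rw [← hsub] at hdiff
    simpa only [sub_add_cancel] using J.add_mem hdiff hc'

theorem exists_fg_le_leadingCoeffIdeal [IsNoetherianRing A] (I : Ideal B) (n : ℕ) :
    ∃ J ≤ I, J.FG ∧ leadingCoeffIdeal f y I n ≤ leadingCoeffIdeal f y J n := by
  classical
  obtain ⟨G, hG⟩ := IsNoetherian.noetherian (leadingCoeffIdeal f y I n)
  have hwit : ∀ a ∈ G, ∃ b ∈ I, a ∈ leadingCoeffIdeal f y (Ideal.span {b}) n := fun a ha => by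
    obtain ⟨c, hcn, hc⟩ := hG ▸ subset_span ha
    exact ⟨_, hc, c, hcn, Ideal.subset_span rfl⟩
  choose! w hwI hw using hwit
  refine ⟨Ideal.span (w '' G), Ideal.span_le.2 (Set.image_subset_iff.2 hwI),
    ⟨G.image w, by rw [coe_image]⟩, ?_⟩
  rw [← hG, span_le]
  exact fun a ha =>
    leadingCoeffIdeal_mono (Ideal.span_mono (by simpa using ⟨a, ha, rfl⟩)) (hw a ha)

variable {σ : RingAut A} (hσ : ∀ a, y * f a = f (σ a) * y)
include hσ

theorem apply_mem_leadingCoeffIdeal_succ {a : A} (ha : a ∈ leadingCoeffIdeal f y I n) :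
    σ a ∈ leadingCoeffIdeal f y I (n + 1) := by
  obtain ⟨c, rfl, hc⟩ := ha
  refine ⟨fun | 0 => 0 | i + 1 => σ (c i), rfl, ?_⟩
  have hy : y * ∑ i ∈ range (n + 1), f (c i) * y ^ i =
      ∑ i ∈ range (n + 1), f (σ (c i)) * y ^ (i + 1) := by
    rw [mul_sum]
    exact sum_congr rfl fun i _ => by rw [← mul_assoc, hσ, mul_assoc, pow_succ']
  simpa [sum_range_succ' _ (n + 1), ← hy] using I.mul_mem_left y hc

theorem pow_apply_mem_leadingCoeffIdeal_add {a : A} (k : ℕ)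
    (ha : a ∈ leadingCoeffIdeal f y I n) : (σ ^ k) a ∈ leadingCoeffIdeal f y I (n + k) := by
  induction k with
  | zero => simpa using ha
  | succ k ih =>
    rw [pow_succ', RingAut.mul_apply, ← add_assoc]
    exact apply_mem_leadingCoeffIdeal_succ hσ ih

theorem exists_leadingCoeffIdeal_stable [IsNoetherianRing A] (I : Ideal B) :
    ∃ N, ∀ k, ∀ a ∈ leadingCoeffIdeal f y I (N + k), (σ ^ k)⁻¹ a ∈ leadingCoeffIdeal f y I N := by
  let L : ℕ →o Ideal A := ⟨fun n => (leadingCoeffIdeal f y I n).comap (σ ^ n),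
    monotone_nat_of_le_succ fun n a ha => by
      simpa [pow_succ', RingAut.mul_apply] using apply_mem_leadingCoeffIdeal_succ hσ ha⟩
  obtain ⟨N, hN⟩ := monotone_stabilizes_iff_noetherian.2 ‹IsNoetherianRing A› L
  refine ⟨N, fun k a ha => ?_⟩
  have h : (σ ^ (N + k))⁻¹ a ∈ L N := by
    rw [hN _ (Nat.le_add_right N k)]
    change (σ ^ (N + k)) ((σ ^ (N + k))⁻¹ a) ∈ leadingCoeffIdeal f y I (N + k)
    rwa [← RingAut.mul_apply, mul_inv_cancel, RingAut.one_apply]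
  have hσN : σ ^ N * (σ ^ (N + k))⁻¹ = (σ ^ k)⁻¹ := by group
  change (σ ^ N) ((σ ^ (N + k))⁻¹ a) ∈ leadingCoeffIdeal f y I N at h
  rwa [← RingAut.mul_apply, hσN] at h

theorem isNoetherianRing_of_forall_mem_skewSpan [IsNoetherianRing A]
    (hgen : ∀ b, b ∈ skewSpan f y) : IsNoetherianRing B := by
  refine (isNoetherianRing_iff_ideal_fg B).2 fun I => ?_
  obtain ⟨N, hN⟩ := exists_leadingCoeffIdeal_stable hσ I
  choose J hJI hJfg hJL using exists_fg_le_leadingCoeffIdeal (f := f) (y := y) I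
  set K := (range (N + 1)).sup J
  have hKI : K ≤ I := Finset.sup_le fun n _ => hJI n
  have hle : ∀ n ≤ N, leadingCoeffIdeal f y I n ≤ leadingCoeffIdeal f y K n := fun n hn =>
    (hJL n).trans (leadingCoeffIdeal_mono (le_sup (mem_range.2 (by omega))))
  have hIK : ∀ n, leadingCoeffIdeal f y I n ≤ leadingCoeffIdeal f y K n := by
    intro n
    rcases le_or_gt n N with hn | hn
    · exact hle n hn
    · obtain ⟨k, rfl⟩ := Nat.exists_eq_add_of_le hn.le
      intro a ha
      have := pow_apply_mem_leadingCoeffIdeal_add hσ k (hle N le_rfl (hN k a ha))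
      rwa [← RingAut.mul_apply, mul_inv_cancel, RingAut.one_apply] at this
  rw [le_antisymm (le_of_leadingCoeffIdeal_le hKI hIK hgen) hKI]
  exact fg_finset_sup _ _ fun n _ => hJfg n

end SkewGenerated

theorem isNoetherianRing_bot_subalgebra (R T : Type*) [CommRing R] [IsNoetherianRing R] [Ring T]
    [Algebra R T] : IsNoetherianRing (⊥ : Subalgebra R T) :=
  isNoetherianRing_of_surjective R _ (algebraMap R (⊥ : Subalgebra R T)) fun ⟨_, hb⟩ => by
    obtain ⟨r, rfl⟩ := Algebra.mem_bot.1 hb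
    exact ⟨r, rfl⟩

def conjRingAut {T S : Type*} [Ring T] [SetLike S T] [SubringClass S T] (s : S) (u : Tˣ)
    (h : ∀ a ∈ s, ↑u * a * ↑u⁻¹ ∈ s) (h' : ∀ a ∈ s, ↑u⁻¹ * a * ↑u ∈ s) : RingAut s where
  toFun a := ⟨u * a * ↑u⁻¹, h a a.2⟩
  invFun a := ⟨↑u⁻¹ * a * u, h' a a.2⟩
  left_inv a := Subtype.ext (by simp [mul_assoc])
  right_inv a := Subtype.ext (by simp [mul_assoc])
  map_mul' a b := Subtype.ext (by simp [mul_assoc])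
  map_add' a b := Subtype.ext (by simp [mul_add, add_mul])

theorem mul_mul_mem_span {R T : Type*} [CommRing R] [Ring T] [Algebra R T] {s : Set T} {p q : T}
    (h : ∀ t ∈ s, p * t * q ∈ span R s) {a : T} (ha : a ∈ span R s) : p * a * q ∈ span R s :=
  span_le (p := (span R s).comap (LinearMap.mulLeftRight R (p, q))).2 h ha

section Monomials

variable {R T M : Type*} [CommRing R] [Ring T] [Algebra R T] [AddCommGroup M]
  {x : M → T} {c : M → M → Rˣ} (hx0 : x 0 = 1)
  (hmul : ∀ k k', x k * x k' = (c k k' : R) • x (k + k'))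

include hmul in
theorem span_image_mul_span_image_le (Λ : AddSubmonoid M) :
    span R (x '' Λ) * span R (x '' Λ) ≤ span R (x '' Λ) := by
  rw [span_mul_span, span_le]
  rintro _ ⟨_, ⟨k, hk, rfl⟩, _, ⟨k', hk', rfl⟩, rfl⟩
  change x k * x k' ∈ _
  rw [hmul]
  exact smul_mem _ _ (subset_span ⟨k + k', Λ.add_mem hk hk', rfl⟩)

/-- The monomial subalgebra `A(Q;Λ)`, for the cocycle `c` in place of `q^{Q(k,k')}`. -/
def monomialSubalgebra (Λ : AddSubmonoid M) : Subalgebra R T :=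
  (span R (x '' Λ)).toSubalgebra (hx0 ▸ subset_span ⟨0, Λ.zero_mem, rfl⟩)
    fun _ _ ha hb => span_image_mul_span_image_le hmul Λ (mul_mem_mul ha hb)

variable {Λ Λ' : AddSubmonoid M}

theorem monomial_mem_monomialSubalgebra {k : M} (hk : k ∈ Λ) :
    x k ∈ monomialSubalgebra hx0 hmul Λ :=
  subset_span ⟨k, hk, rfl⟩

theorem monomialSubalgebra_mono (h : Λ ≤ Λ') :
    monomialSubalgebra hx0 hmul Λ ≤ monomialSubalgebra hx0 hmul Λ' :=
  fun _ ha => span_mono (Set.image_mono h) ha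

theorem monomialSubalgebra_bot : monomialSubalgebra hx0 hmul ⊥ = ⊥ :=
  Subalgebra.toSubmodule_injective <| by
    simp [monomialSubalgebra, hx0, Algebra.toSubmodule_bot, one_eq_span]

include hx0 hmul in
theorem exists_pow_eq_smul (g : M) (n : ℕ) : ∃ u : Rˣ, x g ^ n = (u : R) • x (n • g) := by
  induction n with
  | zero => exact ⟨1, by simp [hx0]⟩
  | succ n ih =>
    obtain ⟨u, hu⟩ := ih
    refine ⟨u * c (n • g) g, ?_⟩
    rw [pow_succ, hu, smul_mul_assoc, hmul, smul_smul, ← Units.val_mul, succ_nsmul]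

include hmul in
theorem exists_mul_eq_smul_mul (g k : M) : ∃ v : Rˣ, x g * x k = (v : R) • (x k * x g) :=
  ⟨c g k * (c k g)⁻¹, by rw [hmul, hmul, smul_smul, Units.val_mul, mul_assoc,
    ← Units.val_mul, inv_mul_cancel, Units.val_one, mul_one, add_comm]⟩

include hx0 hmul in
theorem isUnit_monomial (g : M) : IsUnit (x g) := by
  refine isUnit_iff_exists_and_exists.2 ⟨⟨(((c g (-g))⁻¹ : Rˣ) : R) • x (-g), ?_⟩,
    ⟨(((c (-g) g)⁻¹ : Rˣ) : R) • x (-g), ?_⟩⟩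
  · rw [mul_smul_comm, hmul, add_neg_cancel, hx0, smul_smul, ← Units.val_mul, inv_mul_cancel,
      Units.val_one, one_smul]
  · rw [smul_mul_assoc, hmul, neg_add_cancel, hx0, smul_smul, ← Units.val_mul, inv_mul_cancel,
      Units.val_one, one_smul]

variable {hx0 hmul}

theorem conj_mem_monomialSubalgebra {u : Tˣ} {g : M} (hu : (u : T) = x g) {a : T}
    (ha : a ∈ monomialSubalgebra hx0 hmul Λ) :
    ↑u * a * ↑u⁻¹ ∈ monomialSubalgebra hx0 hmul Λ ∧
      ↑u⁻¹ * a * ↑u ∈ monomialSubalgebra hx0 hmul Λ := by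
  constructor <;> refine mul_mul_mem_span (fun t ht => ?_) ha <;> obtain ⟨k, hk, rfl⟩ := ht
  · obtain ⟨v, hv⟩ := exists_mul_eq_smul_mul hmul g k
    rw [hu, hv, smul_mul_assoc, mul_assoc, ← hu, Units.mul_inv, mul_one]
    exact smul_mem _ _ (subset_span ⟨k, hk, rfl⟩)
  · obtain ⟨v, hv⟩ := exists_mul_eq_smul_mul hmul k g
    rw [mul_assoc, hu, hv, mul_smul_comm, ← mul_assoc, ← hu, Units.inv_mul, one_mul]
    exact smul_mem _ _ (subset_span ⟨k, hk, rfl⟩)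

section Step

variable {g : M} (hΛ : Λ ≤ Λ') (hg : g ∈ Λ')
  (hΛ' : ∀ k ∈ Λ', ∃ k' ∈ Λ, ∃ n : ℕ, k' + n • g = k)
include hΛ hg hΛ'

theorem mem_skewSpan_monomialSubalgebra (b : monomialSubalgebra hx0 hmul Λ') :
    b ∈ skewSpan (Subalgebra.inclusion (monomialSubalgebra_mono hx0 hmul hΛ)).toRingHom
      ⟨x g, monomial_mem_monomialSubalgebra hx0 hmul hg⟩ := by
  obtain ⟨b, hb⟩ := b
  change b ∈ span R _ at hb
  induction hb using span_induction with
  | mem _ hz =>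
    obtain ⟨_, hk', rfl⟩ := hz
    obtain ⟨k, hk, n, rfl⟩ := hΛ' _ hk'
    obtain ⟨u, hu⟩ := exists_pow_eq_smul hx0 hmul g n
    have hx : x k * x g ^ n = ((u * c k (n • g) : Rˣ) : R) • x (k + n • g) := by
      rw [hu, mul_smul_comm, hmul, smul_smul, ← Units.val_mul]
    have hxA : (((u * c k (n • g))⁻¹ : Rˣ) : R) • x k ∈ monomialSubalgebra hx0 hmul Λ :=
      smul_mem _ _ (monomial_mem_monomialSubalgebra hx0 hmul hk)
    convert mul_mem_skewSpan (⟨_, hxA⟩ : monomialSubalgebra hx0 hmul Λ) (pow_mem_skewSpan _ _ n)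
      using 1
    ext
    change _ = (((u * c k (n • g))⁻¹ : Rˣ) : R) • x k * x g ^ n
    rw [smul_mul_assoc, hx, smul_smul, ← Units.val_mul, inv_mul_cancel, Units.val_one, one_smul]
  | zero => exact zero_mem _
  | add _ _ _ _ ha hb => exact add_mem ha hb
  | smul r _ _ ha =>
    convert mul_mem_skewSpan (algebraMap R _ r) ha using 1
    ext
    simp [Algebra.smul_def]

theorem isNoetherianRing_monomialSubalgebra_of_forall_eq_add_nsmul
    [IsNoetherianRing (monomialSubalgebra hx0 hmul Λ)] :
    IsNoetherianRing (monomialSubalgebra hx0 hmul Λ') := by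
  obtain ⟨u, hu⟩ := isUnit_monomial hx0 hmul g
  let σ := conjRingAut (monomialSubalgebra hx0 hmul Λ) u
    (fun _ ha => (conj_mem_monomialSubalgebra hu ha).1)
    (fun _ ha => (conj_mem_monomialSubalgebra hu ha).2)
  refine isNoetherianRing_of_forall_mem_skewSpan (σ := σ) (fun a => Subtype.ext ?_)
    (mem_skewSpan_monomialSubalgebra hΛ hg hΛ')
  change x g * a = u * a * ↑u⁻¹ * x g
  rw [← hu, Units.inv_mul_cancel_right]

end Step

variable (hx0 hmul) in
theorem isNoetherianRing_monomialSubalgebra [IsNoetherianRing R] (hΛ : Λ.FG) :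
    IsNoetherianRing (monomialSubalgebra hx0 hmul Λ) := by
  classical
  obtain ⟨G, rfl⟩ := hΛ
  induction G using Finset.induction_on with
  | empty =>
    rw [coe_empty, AddSubmonoid.closure_empty, monomialSubalgebra_bot]
    exact isNoetherianRing_bot_subalgebra R T
  | insert g G _ ih =>
    refine isNoetherianRing_monomialSubalgebra_of_forall_eq_add_nsmul
      (Λ := AddSubmonoid.closure G) (g := g) (AddSubmonoid.closure_mono (subset_insert _ _))
      (AddSubmonoid.subset_closure (mem_insert_self _ _)) fun k hk => ?_
    rw [coe_insert, Set.insert_eq, AddSubmonoid.closure_union, sup_comm,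
      AddSubmonoid.mem_sup] at hk
    obtain ⟨k', hk', _, hn, rfl⟩ := hk
    obtain ⟨n, rfl⟩ := AddSubmonoid.mem_closure_singleton.1 hn
    exact ⟨k', hk', n, rfl⟩

end Monomials

theorem monomial_subalgebra_noetherian_domain_general
    (R T : Type*) [CommRing R] [IsNoetherianRing R]
    [Ring T] [Algebra R T] [IsDomain T]
    (s : Rˣ) (r : ℕ) (Q : Fin r → Fin r → ℤ)
    (x : (Fin r → ℤ) → T) (hx0 : x 0 = 1)
    (hmul : ∀ k k' : Fin r → ℤ, x k * x k' =
      ((s ^ (∑ i, ∑ j, Q i j * k i * k' j) : Rˣ) : R) • x (k + k'))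
    (Λ : AddSubmonoid (Fin r → ℤ)) (hΛ : Λ.FG) :
    ∃ S : Subalgebra R T,
      Subalgebra.toSubmodule S = Submodule.span R (x '' (Λ : Set (Fin r → ℤ))) ∧
      IsNoetherianRing S ∧ IsDomain S :=
  ⟨monomialSubalgebra hx0 hmul Λ, rfl, isNoetherianRing_monomialSubalgebra hx0 hmul hΛ,
    inferInstance⟩

/-- The monomial subalgebra `A(Q;Λ)` of a quantum torus, for a submonoid `Λ ⊆ ℤ^r` which is
finitely generated as an ℕ-module, is a subalgebra and a Noetherian domain.
The quantum torus is modeled by its free basis of normalized monomials `x k` with the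
normalized product rule. -/
theorem monomial_subalgebra_noetherian_domain
    (R T : Type*) [CommRing R] [IsDomain R] [IsNoetherianRing R]
    [Ring T] [Algebra R T] [IsDomain T]
    (s : Rˣ) (r : ℕ) (Q : Fin r → Fin r → ℤ) (hQ : ∀ i j, Q j i = -Q i j)
    (x : (Fin r → ℤ) → T) (hx0 : x 0 = 1)
    (hmul : ∀ k k' : Fin r → ℤ, x k * x k' =
      ((s ^ (∑ i, ∑ j, Q i j * k i * k' j) : Rˣ) : R) • x (k + k'))
    (hindep : LinearIndependent R x)
    (Λ : AddSubmonoid (Fin r → ℤ)) (hΛ : Λ.FG) :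
    ∃ S : Subalgebra R T,
      Subalgebra.toSubmodule S = Submodule.span R (x '' (Λ : Set (Fin r → ℤ))) ∧
      IsNoetherianRing S ∧ IsDomain S :=
  monomial_subalgebra_noetherian_domain_general R T s r Q x hx0 hmul Λ hΛ
end

section
/- Let Q be an antisymmetric r×r integer matrix over the ground ring R. The center Z(T(Q)) of the quantum torus T(Q) equals the R-span of the normalized monomials x^k with k in the subgroup Λ(Q,q) = {k ∈ ℤ^r : q^{⟨k,k'⟩_Q} = 1 for all k' ∈ ℤ^r}. -/
/-!
In the basis of monomials, multiplying `t = ∑ c_k x^k` by `x^{k'}` on the right or on the left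
rescales the coefficient of `x^{k + k'}` by `s^{⟨k,k'⟩_Q}` or by `s^{-⟨k,k'⟩_Q}` respectively
(antisymmetry of `Q`), where `q = s^2`. Over a domain, `t` is therefore central exactly when
every `k` in its support satisfies `q^{⟨k,k'⟩_Q} = 1` for all `k'`; conversely such monomials
commute with every monomial.
-/

open Submodule

section TwistedMonoidAlgebra

variable {R T Γ : Type*} [CommRing R] [AddCancelCommMonoid Γ]

theorem Module.Basis.repr_map_apply_add {M : Type*} [AddCommGroup M] [Module R M]
    (b : Module.Basis Γ R M) (φ : M →ₗ[R] M) (a : Γ → R) (g : Γ)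
    (hφ : ∀ k, φ (b k) = a k • b (k + g)) (t : M) (k : Γ) :
    b.repr (φ t) (k + g) = a k * b.repr t k := by
  classical
  suffices h : (Finsupp.lapply (k + g)).comp (b.repr.toLinearMap.comp φ) =
      a k • (Finsupp.lapply k).comp b.repr.toLinearMap from LinearMap.congr_fun h t
  refine b.ext fun j => ?_
  by_cases hj : j = k
  · subst hj
    simp [hφ]
  · have hjg : j + g ≠ k + g := fun h => hj (add_right_cancel h)
    simp [hφ, hjg, hj]

variable [IsDomain R] [Ring T] [Algebra R T]

theorem Subalgebra.center_toSubmodule_eq_span_of_twisted_basis (b : Module.Basis Γ R T)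
    (χ : Γ → Γ → R) (hmul : ∀ k k', b k * b k' = χ k k' • b (k + k')) :
    Subalgebra.toSubmodule (Subalgebra.center R T) =
      span R (b '' {k | ∀ k', χ k k' = χ k' k}) := by
  apply le_antisymm
  · intro t ht
    rw [b.mem_span_image]
    intro k hk k'
    have hcomm : t * b k' = b k' * t := ((Subalgebra.mem_center_iff (R := R)).mp ht (b k')).symm
    have hright := b.repr_map_apply_add (LinearMap.mulRight R (b k')) (fun k => χ k k') k'
      (fun j => hmul j k') t k
    have hleft := b.repr_map_apply_add (LinearMap.mulLeft R (b k')) (fun k => χ k' k) k'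
      (fun j => by rw [LinearMap.mulLeft_apply, hmul, add_comm]) t k
    simp only [LinearMap.mulRight_apply, LinearMap.mulLeft_apply, hcomm] at hright hleft
    exact mul_right_cancel₀ (Finsupp.mem_support_iff.mp hk) (hright.symm.trans hleft)
  · rw [span_le]
    rintro _ ⟨k, hk, rfl⟩
    rw [SetLike.mem_coe, Subalgebra.mem_toSubmodule, Subalgebra.mem_center_iff]
    intro a
    suffices h : LinearMap.mulRight R (b k) = LinearMap.mulLeft R (b k) from
      LinearMap.congr_fun h a
    refine b.ext fun k' => ?_
    simp only [LinearMap.mulRight_apply, LinearMap.mulLeft_apply, hmul, hk k', add_comm]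

end TwistedMonoidAlgebra

theorem Units.val_zpow_eq_val_zpow_neg_iff {M : Type*} [Monoid M] (u : Mˣ) (n : ℤ) :
    ((u ^ n : Mˣ) : M) = ((u ^ (-n) : Mˣ) : M) ↔ ((u ^ (2 * n) : Mˣ) : M) = 1 := by
  rw [Units.val_inj, ← Units.val_one, Units.val_inj, zpow_neg, eq_inv_iff_mul_eq_one,
    ← zpow_add, two_mul]

theorem sum_sum_mul_swap_of_antisymm {ι S : Type*} [Fintype ι] [CommRing S] (Q : ι → ι → S)
    (hQ : ∀ i j, Q j i = -Q i j) (k k' : ι → S) :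
    ∑ i, ∑ j, Q i j * k' i * k j = -∑ i, ∑ j, Q i j * k i * k' j := by
  rw [Finset.sum_comm, ← Finset.sum_neg_distrib]
  refine Finset.sum_congr rfl fun j _ => ?_
  rw [← Finset.sum_neg_distrib]
  refine Finset.sum_congr rfl fun i _ => ?_
  rw [hQ j i]
  ring

theorem quantum_torus_center_general
    (R T : Type*) [CommRing R] [IsDomain R] [Ring T] [Algebra R T]
    (s : Rˣ) (r : ℕ) (Q : Fin r → Fin r → ℤ) (hQ : ∀ i j, Q j i = -Q i j)
    (x : (Fin r → ℤ) → T)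
    (hmul : ∀ k k' : Fin r → ℤ, x k * x k' =
      ((s ^ (∑ i, ∑ j, Q i j * k i * k' j) : Rˣ) : R) • x (k + k'))
    (hindep : LinearIndependent R x)
    (hspan : Submodule.span R (Set.range x) = ⊤) :
    {t : T | ∀ a : T, t * a = a * t} =
      (Submodule.span R (x '' {k : Fin r → ℤ |
        ∀ k' : Fin r → ℤ,
          ((s ^ (2 * ∑ i, ∑ j, Q i j * k i * k' j) : Rˣ) : R) = 1}) : Set T) := by
  let b := Module.Basis.mk hindep hspan.ge
  have hb : ⇑b = x := Module.Basis.coe_mk _ _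
  have hcenter := Subalgebra.center_toSubmodule_eq_span_of_twisted_basis b
    (fun k k' => ((s ^ (∑ i, ∑ j, Q i j * k i * k' j) : Rˣ) : R)) (by rwa [hb])
  have hΛ : {k : Fin r → ℤ | ∀ k' : Fin r → ℤ,
        ((s ^ (∑ i, ∑ j, Q i j * k i * k' j) : Rˣ) : R) =
          ((s ^ (∑ i, ∑ j, Q i j * k' i * k j) : Rˣ) : R)} =
      {k : Fin r → ℤ | ∀ k' : Fin r → ℤ,
        ((s ^ (2 * ∑ i, ∑ j, Q i j * k i * k' j) : Rˣ) : R) = 1} := by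
    ext k
    refine forall_congr' fun k' => ?_
    rw [sum_sum_mul_swap_of_antisymm Q hQ k k', Units.val_zpow_eq_val_zpow_neg_iff]
  rw [← hb, ← hΛ, ← hcenter]
  ext t
  simp only [Set.mem_ofPred_eq, SetLike.mem_coe, Subalgebra.mem_toSubmodule,
    Subalgebra.mem_center_iff]
  exact forall_congr' fun a => eq_comm

/-- The center of the quantum torus `T(Q)` is the `R`-span of the normalized monomials `x^k`
with `k` in `Λ(Q,q) = {k | q^{⟨k,k'⟩_Q} = 1 for all k'}`, where `q = s^2`. -/
theorem quantum_torus_center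
    (R T : Type*) [CommRing R] [IsDomain R] [Ring T] [Algebra R T]
    (s : Rˣ) (r : ℕ) (Q : Fin r → Fin r → ℤ) (hQ : ∀ i j, Q j i = -Q i j)
    (x : (Fin r → ℤ) → T) (hx0 : x 0 = 1)
    (hmul : ∀ k k' : Fin r → ℤ, x k * x k' =
      ((s ^ (∑ i, ∑ j, Q i j * k i * k' j) : Rˣ) : R) • x (k + k'))
    (hindep : LinearIndependent R x)
    (hspan : Submodule.span R (Set.range x) = ⊤) :
    {t : T | ∀ a : T, t * a = a * t} =
      (Submodule.span R (x '' {k : Fin r → ℤ |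
        ∀ k' : Fin r → ℤ,
          ((s ^ (2 * ∑ i, ∑ j, Q i j * k i * k' j) : Rˣ) : R) = 1}) : Set T) :=
  quantum_torus_center_general R T s r Q hQ x hmul hindep hspan
end

section
/- Let Q, Q' be antisymmetric integer matrices of sizes r×r and r'×r' respectively, and let H be an r×r' integer matrix with H Q' Hᵀ = Q. Then the R-linear map T(Q) → T(Q') defined on the basis of normalized monomials by x^k ↦ x^{kH} is an R-algebra homomorphism. -/
/-!
The twisting exponents pull back along `H`: `(kH) Q' (k'H)ᵀ = k (H Q' Hᵀ) k'ᵀ = k Q k'ᵀ`, so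
`f (x^k * x^k')` and `f (x^k) * f (x^k')` are the same multiple of `y^{(k+k')H}`. Both sides of
`f (a * b) = f a * f b` are `R`-bilinear in `(a, b)`, so agreement on the spanning monomials
suffices.
-/

namespace Matrix

variable {α m n : Type*} [CommSemiring α] [Fintype m] [Fintype n]

theorem sum_sum_mul_mul_eq_dotProduct_mulVec (M : Matrix m n α) (u : m → α) (v : n → α) :
    ∑ i, ∑ j, M i j * u i * v j = u ⬝ᵥ (M *ᵥ v) := by
  simp only [dotProduct, mulVec, Finset.mul_sum]
  exact Finset.sum_congr rfl fun i _ => Finset.sum_congr rfl fun j _ => by ring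

theorem vecMul_dotProduct_mulVec_vecMul (H : Matrix m n α) (Q : Matrix n n α) (u v : m → α) :
    (u ᵥ* H) ⬝ᵥ (Q *ᵥ (v ᵥ* H)) = u ⬝ᵥ ((H * Q * Hᵀ) *ᵥ v) := by
  rw [dotProduct_mulVec, vecMul_vecMul, ← mulVec_transpose H v, dotProduct_mulVec, vecMul_vecMul,
    ← dotProduct_mulVec]

theorem sum_sum_mul_vecMul_mul_vecMul (H : Matrix m n α) (Q : Matrix n n α) (u v : m → α) :
    ∑ i, ∑ j, Q i j * (u ᵥ* H) i * (v ᵥ* H) j = ∑ a, ∑ b, (H * Q * Hᵀ) a b * u a * v b := by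
  rw [sum_sum_mul_mul_eq_dotProduct_mulVec, sum_sum_mul_mul_eq_dotProduct_mulVec,
    vecMul_dotProduct_mulVec_vecMul]

end Matrix

open Matrix

theorem LinearMap.map_mul_of_map_mul_of_span_eq_top {R A B ι : Type*} [CommSemiring R]
    [Semiring A] [Algebra R A] [Semiring B] [Algebra R B] (f : A →ₗ[R] B) {v : ι → A}
    (hv : Submodule.span R (Set.range v) = ⊤) (h : ∀ i j, f (v i * v j) = f (v i) * f (v j))
    (a b : A) : f (a * b) = f a * f b := by
  have : (LinearMap.mul R A).compr₂ f = (LinearMap.mul R B).compl₁₂ f f :=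
    LinearMap.ext_on_range hv fun i => LinearMap.ext_on_range hv fun j => h i j
  exact LinearMap.congr_fun₂ this a b

theorem multiplicatively_linear_homomorphism_general
    (R T T' : Type*) [CommRing R] [Ring T] [Algebra R T] [Ring T'] [Algebra R T']
    (s : Rˣ) (r r' : ℕ)
    (Q : Fin r → Fin r → ℤ) (Q' : Fin r' → Fin r' → ℤ)
    (H : Fin r → Fin r' → ℤ)
    (hH : ∀ i j, (∑ a, ∑ b, H i a * Q' a b * H j b) = Q i j)
    (x : (Fin r → ℤ) → T) (hx0 : x 0 = 1)
    (hxmul : ∀ k k' : Fin r → ℤ, x k * x k' =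
      ((s ^ (∑ i, ∑ j, Q i j * k i * k' j) : Rˣ) : R) • x (k + k'))
    (hxspan : Submodule.span R (Set.range x) = ⊤)
    (y : (Fin r' → ℤ) → T') (hy0 : y 0 = 1)
    (hymul : ∀ m m' : Fin r' → ℤ, y m * y m' =
      ((s ^ (∑ i, ∑ j, Q' i j * m i * m' j) : Rˣ) : R) • y (m + m'))
    (f : T →ₗ[R] T')
    (hf : ∀ k : Fin r → ℤ, f (x k) = y (fun j => ∑ i, k i * H i j)) :
    f 1 = 1 ∧ ∀ a b : T, f (a * b) = f a * f b := by
  have hf' : ∀ k, f (x k) = y (k ᵥ* of H) := hf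
  have hHQ : of H * of Q' * (of H)ᵀ = of Q := by
    ext i j
    simp only [mul_apply, transpose_apply, of_apply, Finset.sum_mul, ← hH i j]
    exact Finset.sum_comm
  have hexp : ∀ k k', ∑ i, ∑ j, Q' i j * (k ᵥ* of H) i * (k' ᵥ* of H) j =
      ∑ i, ∑ j, Q i j * k i * k' j := fun k k' => by
    simpa only [hHQ, of_apply] using sum_sum_mul_vecMul_mul_vecMul (of H) (of Q') k k'
  refine ⟨by rw [← hx0, hf', zero_vecMul, hy0], ?_⟩
  refine f.map_mul_of_map_mul_of_span_eq_top hxspan fun k k' => ?_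
  rw [hxmul, map_smul, hf', hf', hf', hymul, add_vecMul, hexp]

/-- If `H Q' Hᵀ = Q`, then the `R`-linear map between the quantum tori `T(Q) → T(Q')`
sending the normalized monomial `x^k` to `x^{kH}` is an `R`-algebra homomorphism. -/
theorem multiplicatively_linear_homomorphism
    (R T T' : Type*) [CommRing R] [Ring T] [Algebra R T] [Ring T'] [Algebra R T']
    (s : Rˣ) (r r' : ℕ)
    (Q : Fin r → Fin r → ℤ) (Q' : Fin r' → Fin r' → ℤ)
    (hQ : ∀ i j, Q j i = -Q i j) (hQ' : ∀ i j, Q' j i = -Q' i j)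
    (H : Fin r → Fin r' → ℤ)
    (hH : ∀ i j, (∑ a, ∑ b, H i a * Q' a b * H j b) = Q i j)
    (x : (Fin r → ℤ) → T) (hx0 : x 0 = 1)
    (hxmul : ∀ k k' : Fin r → ℤ, x k * x k' =
      ((s ^ (∑ i, ∑ j, Q i j * k i * k' j) : Rˣ) : R) • x (k + k'))
    (hxspan : Submodule.span R (Set.range x) = ⊤)
    (y : (Fin r' → ℤ) → T') (hy0 : y 0 = 1)
    (hymul : ∀ m m' : Fin r' → ℤ, y m * y m' =
      ((s ^ (∑ i, ∑ j, Q' i j * m i * m' j) : Rˣ) : R) • y (m + m'))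
    (f : T →ₗ[R] T')
    (hf : ∀ k : Fin r → ℤ, f (x k) = y (fun j => ∑ i, k i * H i j)) :
    f 1 = 1 ∧ ∀ a b : T, f (a * b) = f a * f b :=
  multiplicatively_linear_homomorphism_general R T T' s r r' Q Q' H hH x hx0 hxmul hxspan y hy0
    hymul f hf
end

section
/- Under the hypotheses of the sandwich embedding (A a domain with T_+(Q) ⊆ A ⊆ T(Q)), the set S = {q^{n/2} x^k : n ∈ ℤ, k ∈ ℕ^r} is a (left and right) Ore multiplicative set in A. -/
/-!
Monomials `x^k, x^l` commute up to a power of `q^{1/2}`, so every element `v` of the quantum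
space can be moved past a monomial: `x^k v = v' x^k` and `v x^k = x^k v''`. Given `a ∈ A`,
pick `x^l` with `x^l a` in the quantum space. Left Ore: `(x^k x^l) a = v' x^k`. Right Ore:
`x^l (a x^{l+k}) = (x^l a) x^{l+k} = x^{l+k} v''`, and `x^{l+k}` is a unit multiple of `x^l x^k`;
cancelling `x^l` in the domain `A` gives `a x^{l+k} ∈ x^k A`.
-/

open Submodule

section QCommute

variable {R A : Type*} [CommSemiring R] [Semiring A] [Algebra R A]

variable (R) in
def IsQCommute (x z : A) : Prop :=
  ∃ u : Rˣ, x * z = u • (z * x)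

theorem IsQCommute.symm {x z : A} (h : IsQCommute R x z) : IsQCommute R z x := by
  obtain ⟨u, hu⟩ := h
  exact ⟨u⁻¹, by rw [hu, inv_smul_smul]⟩

theorem exists_mul_eq_mul_of_forall_isQCommute {P : Set A} {x v : A}
    (h : ∀ p ∈ P, IsQCommute R x p) (hv : v ∈ span R P) : ∃ w, x * v = w * x := by
  suffices span R P ≤ (LinearMap.range (LinearMap.mulRight R x)).comap (LinearMap.mulLeft R x) by
    obtain ⟨w, hw⟩ := this hv
    exact ⟨w, hw.symm⟩
  refine span_le.mpr fun p hp => ?_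
  obtain ⟨u, hu⟩ := h p hp
  exact ⟨u • p, (smul_mul_assoc u p x).trans hu.symm⟩

theorem exists_mul_eq_mul_of_forall_isQCommute' {P : Set A} {x v : A}
    (h : ∀ p ∈ P, IsQCommute R x p) (hv : v ∈ span R P) : ∃ w, v * x = x * w := by
  suffices span R P ≤ (LinearMap.range (LinearMap.mulLeft R x)).comap (LinearMap.mulRight R x) by
    obtain ⟨w, hw⟩ := this hv
    exact ⟨w, hw.symm⟩
  refine span_le.mpr fun p hp => ?_
  obtain ⟨u, hu⟩ := (h p hp).symm
  exact ⟨u • p, (mul_smul_comm u x p).trans hu.symm⟩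

section Monomials

variable {Γ : Type*} [AddCommMonoid Γ] {N : AddSubmonoid Γ} {s : Rˣ} {c : Γ → Γ → ℤ}
  {y : Γ → A}

variable (N s y) in
def scaledMonomials : Set A :=
  {a | ∃ (m : ℤ) (k : Γ), k ∈ N ∧ a = s ^ m • y k}

theorem monomial_mem_scaledMonomials {k : Γ} (hk : k ∈ N) : y k ∈ scaledMonomials N s y :=
  ⟨0, k, hk, by rw [zpow_zero, one_smul]⟩

theorem one_mem_scaledMonomials (hy0 : y 0 = 1) : (1 : A) ∈ scaledMonomials N s y :=
  hy0 ▸ monomial_mem_scaledMonomials N.zero_mem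

variable (hy : ∀ k ∈ N, ∀ l ∈ N, y k * y l = s ^ c k l • y (k + l))
include hy

theorem monomial_add_eq_smul_mul {k l : Γ} (hk : k ∈ N) (hl : l ∈ N) :
    y (k + l) = s ^ (-c k l) • (y k * y l) := by
  rw [hy k hk l hl, smul_smul, ← zpow_add, neg_add_cancel, zpow_zero, one_smul]

theorem isQCommute_monomial {k l : Γ} (hk : k ∈ N) (hl : l ∈ N) :
    IsQCommute R (y k) (y l) :=
  ⟨s ^ (c k l - c l k), by
    rw [hy k hk l hl, hy l hl k hk, smul_smul, ← zpow_add, sub_add_cancel, add_comm]⟩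

theorem mul_mem_scaledMonomials {a b : A} (ha : a ∈ scaledMonomials N s y)
    (hb : b ∈ scaledMonomials N s y) : a * b ∈ scaledMonomials N s y := by
  obtain ⟨m, k, hk, rfl⟩ := ha
  obtain ⟨n, l, hl, rfl⟩ := hb
  refine ⟨m + n + c k l, k + l, N.add_mem hk hl, ?_⟩
  rw [smul_mul_smul_comm, hy k hk l hl, smul_smul, zpow_add, zpow_add]

theorem exists_mul_eq_mul_scaledMonomials {a t : A} {l : Γ} (hl : l ∈ N)
    (ha : y l * a ∈ span R (y '' N)) (ht : t ∈ scaledMonomials N s y) :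
    ∃ t' ∈ scaledMonomials N s y, ∃ b, t' * a = b * t := by
  obtain ⟨m, k, hk, rfl⟩ := ht
  obtain ⟨w, hw⟩ := exists_mul_eq_mul_of_forall_isQCommute
    (by rintro _ ⟨p, hp, rfl⟩; exact isQCommute_monomial hy hk hp) ha
  refine ⟨y k * y l, mul_mem_scaledMonomials hy (monomial_mem_scaledMonomials hk)
    (monomial_mem_scaledMonomials hl), s ^ (-m) • w, ?_⟩
  rw [mul_assoc, hw, smul_mul_smul_comm, ← zpow_add, neg_add_cancel, zpow_zero, one_smul]

theorem exists_mul_eq_mul_scaledMonomials' [IsLeftCancelMulZero A] {a t : A} {l : Γ}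
    (hl : l ∈ N) (ha : y l * a ∈ span R (y '' N)) (ht : t ∈ scaledMonomials N s y) :
    ∃ t' ∈ scaledMonomials N s y, ∃ b, a * t' = t * b := by
  obtain ⟨m, k, hk, rfl⟩ := ht
  have hlk := monomial_add_eq_smul_mul hy hl hk
  refine ⟨y (l + k), monomial_mem_scaledMonomials (N.add_mem hl hk), ?_⟩
  rcases eq_or_ne (y l) 0 with hl0 | hl0
  · exact ⟨0, by rw [hlk, hl0, zero_mul, smul_zero, mul_zero, mul_zero]⟩
  obtain ⟨w, hw⟩ := exists_mul_eq_mul_of_forall_isQCommute'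
    (by rintro _ ⟨p, hp, rfl⟩; exact isQCommute_monomial hy (N.add_mem hl hk) hp) ha
  refine ⟨s ^ (-c l k - m) • w, mul_left_cancel₀ hl0 ?_⟩
  calc y l * (a * y (l + k)) = y (l + k) * w := by rw [← mul_assoc, hw]
    _ = y l * (s ^ m • y k * s ^ (-c l k - m) • w) := by
      rw [hlk, smul_mul_smul_comm, ← zpow_add, add_sub_cancel, smul_mul_assoc, mul_assoc,
        mul_smul_comm]

end Monomials

end QCommute

theorem monomials_form_ore_set_general
    (R A : Type*) [CommRing R] [Ring A] [Algebra R A] [IsDomain A]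
    (s : Rˣ) (r : ℕ) (Q : Fin r → Fin r → ℤ)
    (y : (Fin r → ℤ) → A) (hy0 : y 0 = 1)
    (hymul : ∀ k k' : Fin r → ℤ, (∀ i, 0 ≤ k i) → (∀ i, 0 ≤ k' i) →
      y k * y k' = ((s ^ (∑ i, ∑ j, Q i j * k i * k' j) : Rˣ) : R) • y (k + k'))
    (habsorb : ∀ a : A, ∃ k : Fin r → ℤ, (∀ i, 0 ≤ k i) ∧
      y k * a ∈ Submodule.span R (y '' {k : Fin r → ℤ | ∀ i, 0 ≤ k i}))
    (Sset : Set A)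
    (hSset : Sset = {a : A | ∃ (m : ℤ) (k : Fin r → ℤ),
      (∀ i, 0 ≤ k i) ∧ a = ((s ^ m : Rˣ) : R) • y k}) :
    (1 : A) ∈ Sset ∧
    (∀ a ∈ Sset, ∀ b ∈ Sset, a * b ∈ Sset) ∧
    (∀ a : A, ∀ t ∈ Sset,
      (∃ t' ∈ Sset, ∃ b : A, t' * a = b * t) ∧
      (∃ t'' ∈ Sset, ∃ c : A, a * t'' = t * c)) := by
  have hS : Sset = scaledMonomials (AddSubmonoid.nonneg (Fin r → ℤ)) s y := hSset
  have hy : ∀ k ∈ AddSubmonoid.nonneg (Fin r → ℤ), ∀ l ∈ AddSubmonoid.nonneg (Fin r → ℤ),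
      y k * y l = s ^ (∑ i, ∑ j, Q i j * k i * l j) • y (k + l) :=
    fun k hk l hl => hymul k l hk hl
  subst hS
  refine ⟨one_mem_scaledMonomials hy0, fun a ha b hb => mul_mem_scaledMonomials hy ha hb,
    fun a t ht => ?_⟩
  obtain ⟨l, hl, ha⟩ := habsorb a
  exact ⟨exists_mul_eq_mul_scaledMonomials hy hl ha ht,
    exists_mul_eq_mul_scaledMonomials' hy hl ha ht⟩

/-- Under the sandwich hypotheses (`A` a domain containing the quantum space, with every
element absorbed into the quantum space by a monomial), the set
`S = {q^{n/2} x^k : n ∈ ℤ, k ∈ ℕ^r}` is a multiplicative set satisfying the left and right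
Ore conditions in `A`. -/
theorem monomials_form_ore_set
    (R A : Type*) [CommRing R] [IsDomain R] [Ring A] [Algebra R A] [IsDomain A]
    (s : Rˣ) (r : ℕ) (Q : Fin r → Fin r → ℤ) (hQ : ∀ i j, Q j i = -Q i j)
    (y : (Fin r → ℤ) → A) (hy0 : y 0 = 1)
    (hymul : ∀ k k' : Fin r → ℤ, (∀ i, 0 ≤ k i) → (∀ i, 0 ≤ k' i) →
      y k * y k' = ((s ^ (∑ i, ∑ j, Q i j * k i * k' j) : Rˣ) : R) • y (k + k'))
    (habsorb : ∀ a : A, ∃ k : Fin r → ℤ, (∀ i, 0 ≤ k i) ∧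
      y k * a ∈ Submodule.span R (y '' {k : Fin r → ℤ | ∀ i, 0 ≤ k i}))
    (Sset : Set A)
    (hSset : Sset = {a : A | ∃ (m : ℤ) (k : Fin r → ℤ),
      (∀ i, 0 ≤ k i) ∧ a = ((s ^ m : Rˣ) : R) • y k}) :
    (1 : A) ∈ Sset ∧
    (∀ a ∈ Sset, ∀ b ∈ Sset, a * b ∈ Sset) ∧
    (∀ a : A, ∀ t ∈ Sset,
      (∃ t' ∈ Sset, ∃ b : A, t' * a = b * t) ∧
      (∃ t'' ∈ Sset, ∃ c : A, a * t'' = t * c)) :=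
  monomials_form_ore_set_general R A s r Q y hy0 hymul habsorb Sset hSset
end

section
/- Let Λ ⊆ ℤ^r be a submonoid finitely generated as an ℕ-module, and let A(Q;Λ) be the corresponding monomial subalgebra of the quantum torus T(Q) over a field k = Fr(R). Then the Gelfand–Kirillov dimension of A(Q;Λ) equals the rank of the subgroup of ℤ^r generated by Λ. -/
open Filter

/-- Gelfand–Kirillov dimension of an algebra `A` over a field `K`: the supremum over
finite-dimensional generating subspaces `V` of `limsup_n log dim(∑_{i≤n} V^i) / log n`. -/
noncomputable def GKdim (K A : Type*) [Field K] [Ring A] [Algebra K A] : ℝ :=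
  sSup {d : ℝ | ∃ V : Submodule K A, V.FG ∧ Algebra.adjoin K (V : Set A) = ⊤ ∧
    d = Filter.limsup (fun n : ℕ =>
      Real.log (Module.finrank K ↥(⨆ i ∈ Finset.range (n + 1), V ^ i)) / Real.log n)
      Filter.atTop}

/-!
The monomials `x k`, `k ∈ Λ`, form a basis of `S` that is multiplicative up to units of `K`.
Hence for a finite `F ⊆ Λ` containing `0` the powers of `span (x '' F)` are the spans of the
iterated sumsets `n • F`, and the growth of `S` is the growth of `|n • F|`, while every finite
dimensional subspace lies in some `span (x '' F)`. Coordinates in a basis of the free group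
`⟨Λ⟩ ≅ ℤ^d` put `n • F` in a box of side `O(n)`, so `|n • F| = O(n^d)`. Conversely `Λ` contains
`d` linearly independent vectors; their `ℕ`-combinations with coefficients `≤ m` are distinct and
lie in `O(m) • F` when `F` generates `Λ`, so `|n • F| ≥ c n^d`. Thus `log |n • F| / log n → d`.
-/

open Pointwise Module Submodule Topology

namespace Finset

variable {M : Type*} [AddCommMonoid M] [DecidableEq M]

theorem sum_mem_sum_nsmul {ι : Type*} (s : Finset ι) (g : ι → M) (m : ι → ℕ) (F : Finset M)
    (h : ∀ i ∈ s, g i ∈ m i • F) : ∑ i ∈ s, g i ∈ (∑ i ∈ s, m i) • F := by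
  classical
  induction s using Finset.induction_on with
  | empty => simp
  | insert a s ha ih =>
    rw [sum_insert ha, sum_insert ha, add_nsmul]
    exact add_mem_add (h a (mem_insert_self a s)) (ih fun i hi => h i (mem_insert_of_mem hi))

theorem exists_mem_nsmul_of_mem_closure {F : Finset M} {g : M}
    (hg : g ∈ AddSubmonoid.closure (F : Set M)) : ∃ n : ℕ, g ∈ n • F := by
  induction hg using AddSubmonoid.closure_induction with
  | mem f hf => exact ⟨1, by rwa [one_nsmul]⟩
  | zero => exact ⟨0, by simp⟩
  | add a b _ _ iha ihb =>
    obtain ⟨n, hn⟩ := iha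
    obtain ⟨m, hm⟩ := ihb
    exact ⟨n + m, by rw [add_nsmul]; exact add_mem_add hn hm⟩

theorem nsmul_subset_Icc {α : Type*} [AddCommMonoid α] [PartialOrder α] [IsOrderedAddMonoid α]
    [LocallyFiniteOrder α] [DecidableEq α] {s : Finset α} {a b : α} (h : s ⊆ Icc a b) :
    ∀ n : ℕ, n • s ⊆ Icc (n • a) (n • b)
  | 0 => by simp [← Finset.singleton_zero]
  | n + 1 => by
    rw [succ_nsmul, succ_nsmul, succ_nsmul]
    exact (add_subset_add (nsmul_subset_Icc h n) h).trans (Icc_add_Icc_subset _ _ _ _)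

theorem card_nsmul_le_of_injective {ι : Type*} [Fintype ι] (φ : M →+ (ι → ℤ))
    (hφ : Function.Injective φ) (F : Finset M) :
    ∃ C : ℝ, 1 ≤ C ∧ ∀ᶠ n : ℕ in atTop, ((n • F).card : ℝ) ≤ C * n ^ Fintype.card ι := by
  classical
  set B : ℕ := ∑ f ∈ F, ∑ i, (φ f i).natAbs
  have hF : F.image φ ⊆ Icc (-fun _ => (B : ℤ)) (fun _ => (B : ℤ)) := by
    intro v hv
    obtain ⟨f, hf, rfl⟩ := mem_image.1 hv
    have hle : ∀ i, |φ f i| ≤ B := fun i => by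
      rw [Int.abs_eq_natAbs]
      exact_mod_cast (single_le_sum (f := fun i => (φ f i).natAbs) (fun _ _ => Nat.zero_le _)
        (mem_univ i)).trans
          (single_le_sum (f := fun f => ∑ i, (φ f i).natAbs) (fun _ _ => Nat.zero_le _) hf)
    exact mem_Icc.2 ⟨fun i => neg_le_of_abs_le (hle i), fun i => le_of_abs_le (hle i)⟩
  have hcard : ∀ n : ℕ, (n • F).card ≤ (2 * B * n + 1) ^ Fintype.card ι := fun n => by
    calc (n • F).card = (n • F.image φ).card := by
          rw [← image_nsmul, card_image_of_injective _ hφ]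
      _ ≤ (Icc (n • -fun _ => (B : ℤ)) (n • fun _ => (B : ℤ))).card :=
          card_le_card (nsmul_subset_Icc hF n)
      _ = (2 * B * n + 1) ^ Fintype.card ι := by
          rw [Pi.card_Icc]
          simp only [Pi.smul_apply, Pi.neg_apply, Int.card_Icc, prod_const, card_univ]
          congr 1
          rw [← Int.toNat_natCast (2 * B * n + 1), nsmul_eq_mul, nsmul_eq_mul]
          push_cast
          ring_nf
  refine ⟨(2 * B + 1) ^ Fintype.card ι, one_le_pow₀ (by linarith [B.cast_nonneg (α := ℝ)]),
    eventually_atTop.2 ⟨1, fun n hn => ?_⟩⟩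
  have hn' : (1 : ℝ) ≤ n := by exact_mod_cast hn
  calc ((n • F).card : ℝ) ≤ ((2 * B * n + 1 : ℕ) : ℝ) ^ Fintype.card ι := by
        exact_mod_cast hcard n
    _ ≤ ((2 * B + 1) * n) ^ Fintype.card ι := by
        gcongr
        push_cast
        nlinarith [B.cast_nonneg (α := ℝ)]
    _ = (2 * B + 1) ^ Fintype.card ι * n ^ Fintype.card ι := mul_pow _ _ _

theorem le_card_nsmul_of_injective {ι : Type*} [Fintype ι] (v : ι → M)
    (hv : Function.Injective fun a : ι → ℕ => ∑ j, a j • v j) {F : Finset M} (h0 : 0 ∈ F)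
    (hvF : ∀ j, v j ∈ AddSubmonoid.closure (F : Set M)) :
    ∃ c : ℝ, 0 < c ∧ ∀ n : ℕ, c * n ^ Fintype.card ι ≤ (n • F).card := by
  classical
  set d := Fintype.card ι
  choose L hL using fun j => exists_mem_nsmul_of_mem_closure (hvF j)
  set D := d * univ.sup L + 1
  have hvD : ∀ j, v j ∈ (univ.sup L) • F := fun j =>
    nsmul_subset_nsmul_right h0 (le_sup (mem_univ j)) (hL j)
  -- the `(m + 1) ^ d` sums `∑ a j • v j` with `a j ≤ m` are distinct elements of `(D * m) • F`
  have hbox : ∀ m : ℕ, (m + 1) ^ d ≤ ((D * m) • F).card := fun m => by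
    have hmaps : ∀ a ∈ Fintype.piFinset fun _ : ι => range (m + 1),
        ∑ j, a j • v j ∈ (D * m) • F := fun a ha => by
      have hsum := sum_mem_sum_nsmul univ (fun j => a j • v j) (fun j => a j * univ.sup L) F
        fun j _ => by rw [mul_nsmul']; exact nsmul_mem_nsmul (hvD j)
      refine nsmul_subset_nsmul_right h0 ?_ hsum
      have ha' : ∀ j, a j ≤ m := fun j =>
        Nat.lt_succ_iff.1 (mem_range.1 (Fintype.mem_piFinset.1 ha j))
      calc ∑ j, a j * univ.sup L ≤ ∑ _j : ι, m * univ.sup L :=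
            sum_le_sum fun j _ => Nat.mul_le_mul_right _ (ha' j)
        _ ≤ D * m := by simp only [sum_const, card_univ, smul_eq_mul, D]; nlinarith
    calc (m + 1) ^ d = (Fintype.piFinset fun _ : ι => range (m + 1)).card := by simp [d]
      _ ≤ ((D * m) • F).card := card_le_card_of_injOn _ hmaps hv.injOn
  have hD : (0 : ℝ) < D := by positivity
  refine ⟨1 / D ^ d, by positivity, fun n => ?_⟩
  have hlt : (n : ℝ) < D * (n / D + 1 : ℕ) := by exact_mod_cast Nat.lt_mul_div_succ n (by omega)
  calc 1 / (D : ℝ) ^ d * n ^ d = (n / D) ^ d := by rw [div_pow, one_div_mul_eq_div]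
    _ ≤ ((n / D + 1 : ℕ) : ℝ) ^ d := by
        gcongr
        rw [div_le_iff₀ hD]
        linarith
    _ ≤ ((D * (n / D)) • F).card := by exact_mod_cast hbox (n / D)
    _ ≤ (n • F).card := by
        exact_mod_cast card_le_card (nsmul_subset_nsmul_right h0 (Nat.mul_div_le n D))

end Finset

theorem tendsto_log_mul_pow_div_log {c : ℝ} (hc : 0 < c) (d : ℕ) :
    Tendsto (fun n : ℕ => Real.log (c * n ^ d) / Real.log n) atTop (𝓝 d) := by
  have hlog : Tendsto (fun n : ℕ => Real.log n) atTop atTop :=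
    Real.tendsto_log_atTop.comp tendsto_natCast_atTop_atTop
  have h := (hlog.inv_tendsto_atTop.const_mul (Real.log c)).add_const (d : ℝ)
  rw [mul_zero, zero_add] at h
  refine h.congr' ?_
  filter_upwards [eventually_ge_atTop 2] with n hn
  have hn0 : Real.log n ≠ 0 := (Real.log_pos (by exact_mod_cast hn)).ne'
  rw [Real.log_mul hc.ne' (by positivity), Real.log_pow, Pi.inv_apply]
  field_simp

theorem limsup_log_div_log_le {u : ℕ → ℕ} {C : ℝ} {d : ℕ} (hC : 1 ≤ C)
    (hu : ∀ᶠ n in atTop, (u n : ℝ) ≤ C * n ^ d) :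
    limsup (fun n => Real.log (u n) / Real.log n) atTop ≤ d := by
  have hlim := tendsto_log_mul_pow_div_log (zero_lt_one.trans_le hC) d
  refine (limsup_le_limsup ?_ ?_ hlim.isBoundedUnder_le).trans hlim.limsup_eq.le
  · filter_upwards [hu, eventually_ge_atTop 1] with n hun hn
    have hCn : 1 ≤ C * n ^ d :=
      one_le_mul_of_one_le_of_one_le hC (one_le_pow₀ (by exact_mod_cast hn))
    refine div_le_div_of_nonneg_right ?_ (Real.log_natCast_nonneg n)
    rcases (u n).eq_zero_or_pos with h | h
    · simpa [h] using Real.log_nonneg hCn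
    · exact Real.log_le_log (by exact_mod_cast h) hun
  · exact isCoboundedUnder_le_of_le atTop fun n =>
      div_nonneg (Real.log_natCast_nonneg _) (Real.log_natCast_nonneg _)

theorem tendsto_log_div_log_of_bounds {u : ℕ → ℕ} {c C : ℝ} {d : ℕ} (hc : 0 < c) (hC : 1 ≤ C)
    (hlow : ∀ n, c * n ^ d ≤ u n) (hup : ∀ᶠ n in atTop, (u n : ℝ) ≤ C * n ^ d) :
    Tendsto (fun n => Real.log (u n) / Real.log n) atTop (𝓝 d) := by
  refine tendsto_of_tendsto_of_tendsto_of_le_of_le' (tendsto_log_mul_pow_div_log hc d)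
    (tendsto_log_mul_pow_div_log (zero_lt_one.trans_le hC) d) ?_ ?_
  · filter_upwards [eventually_ge_atTop 1] with n hn
    have hn0 : (0 : ℝ) < n := by exact_mod_cast hn
    have : 0 < c * n ^ d := by positivity
    gcongr
    exact hlow n
  · filter_upwards [hup, eventually_ge_atTop 1] with n hun hn
    have hu0 : (0 : ℝ) < u n := (by positivity : 0 < c * (n:ℝ) ^ d).trans_le (hlow n)
    gcongr

theorem iSup_range_pow_eq_pow {α : Type*} [Monoid α] [CompleteLattice α] [MulLeftMono α] {a : α}
    (ha : 1 ≤ a) (n : ℕ) : ⨆ i ∈ Finset.range (n + 1), a ^ i = a ^ n :=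
  le_antisymm
    (iSup₂_le fun _ hi => pow_le_pow_right' ha (Nat.lt_succ_iff.1 (Finset.mem_range.1 hi)))
    (le_iSup₂_of_le n (Finset.self_mem_range_succ n) le_rfl)

theorem finrank_span_image_finset {K A ι : Type*} [Field K] [Ring A] [Algebra K A] {y : ι → A}
    (hy : LinearIndependent K y) (F : Finset ι) :
    finrank K (span K (y '' F)) = F.card := by
  rw [← Subtype.range_coe (s := (F : Set ι)), ← Set.range_comp,
    finrank_span_eq_card (hy.comp _ Subtype.val_injective)]
  simp

theorem Module.Basis.exists_finset_le_span_image {K A ι : Type*} [Field K] [Ring A]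
    [Algebra K A] (b : Basis ι K A) {V : Submodule K A}
    (hV : V.FG) : ∃ F : Finset ι, V ≤ span K (b '' F) := by
  classical
  obtain ⟨t, rfl⟩ := hV
  refine ⟨t.biUnion fun w => (b.repr w).support, span_le.2 fun w hw => ?_⟩
  exact b.mem_span_image.2
    (Finset.coe_subset.2 (Finset.subset_biUnion_of_mem (fun w => (b.repr w).support) hw))

section MonomialBasis

variable {K A M : Type*} [Field K] [Ring A] [Algebra K A] [AddCommMonoid M] {y : M → A}

theorem span_image_mul_span_image (hy : ∀ m m', ∃ c : Kˣ, y m * y m' = (c : K) • y (m + m'))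
    (s t : Set M) : span K (y '' s) * span K (y '' t) = span K (y '' (s + t)) := by
  rw [span_mul_span]
  apply le_antisymm <;> rw [span_le]
  · rintro _ ⟨_, ⟨m, hm, rfl⟩, _, ⟨m', hm', rfl⟩, rfl⟩
    obtain ⟨c, hc⟩ := hy m m'
    change y m * y m' ∈ _
    rw [hc]
    exact smul_mem _ _ (subset_span ⟨m + m', Set.add_mem_add hm hm', rfl⟩)
  · rintro _ ⟨_, ⟨m, hm, m', hm', rfl⟩, rfl⟩
    obtain ⟨c, hc⟩ := hy m m'
    rw [← inv_smul_smul₀ c.ne_zero (y (m + m')), ← hc]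
    exact smul_mem _ _ (subset_span (Set.mul_mem_mul ⟨m, hm, rfl⟩ ⟨m', hm', rfl⟩))

theorem span_image_pow (hy0 : y 0 = 1) (hy : ∀ m m', ∃ c : Kˣ, y m * y m' = (c : K) • y (m + m'))
    (s : Set M) (n : ℕ) : span K (y '' s) ^ n = span K (y '' (n • s)) := by
  induction n with
  | zero => rw [pow_zero, zero_nsmul, ← Set.singleton_zero, Set.image_singleton, hy0, one_eq_span]
  | succ n ih => rw [pow_succ, ih, span_image_mul_span_image hy, succ_nsmul]

theorem iSup_pow_span_image_eq [DecidableEq M] (hy0 : y 0 = 1)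
    (hy : ∀ m m', ∃ c : Kˣ, y m * y m' = (c : K) • y (m + m')) {F : Finset M} (h0 : 0 ∈ F)
    (n : ℕ) : ⨆ i ∈ Finset.range (n + 1), span K (y '' F) ^ i = span K (y '' ↑(n • F)) := by
  have h1 : 1 ≤ span K (y '' F) := one_le.2 (subset_span ⟨0, h0, hy0⟩)
  rw [iSup_range_pow_eq_pow h1, span_image_pow hy0 hy, Finset.coe_nsmul]

theorem adjoin_span_image_eq_top (hy0 : y 0 = 1)
    (hy : ∀ m m', ∃ c : Kˣ, y m * y m' = (c : K) • y (m + m'))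
    (hspan : span K (Set.range y) = ⊤) {F : Finset M}
    (hF : AddSubmonoid.closure (F : Set M) = ⊤) :
    Algebra.adjoin K (span K (y '' F) : Set A) = ⊤ := by
  rw [Algebra.adjoin_span, eq_top_iff]
  intro a _
  refine (span_le (p := Subalgebra.toSubmodule (Algebra.adjoin K (y '' F)))).2 ?_
    (hspan ▸ mem_top : a ∈ span K (Set.range y))
  rintro _ ⟨m, rfl⟩
  change y m ∈ Algebra.adjoin K (y '' F)
  have hm : m ∈ AddSubmonoid.closure (F : Set M) := hF ▸ AddSubmonoid.mem_top m
  induction hm using AddSubmonoid.closure_induction with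
  | mem m hm => exact Algebra.subset_adjoin ⟨m, hm, rfl⟩
  | zero => rw [hy0]; exact one_mem _
  | add m m' _ _ ihm ihm' =>
    obtain ⟨c, hc⟩ := hy m m'
    rw [← inv_smul_smul₀ c.ne_zero (y (m + m')), ← hc]
    exact Subalgebra.smul_mem _ (mul_mem ihm ihm') _

theorem finrank_iSup_pow_span_image [DecidableEq M] (hy0 : y 0 = 1)
    (hy : ∀ m m', ∃ c : Kˣ, y m * y m' = (c : K) • y (m + m')) (hind : LinearIndependent K y)
    {F : Finset M} (h0 : 0 ∈ F) (n : ℕ) :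
    finrank K ↥(⨆ i ∈ Finset.range (n + 1), span K (y '' F) ^ i) = (n • F).card := by
  rw [iSup_pow_span_image_eq hy0 hy h0, finrank_span_image_finset hind]

theorem Module.Basis.exists_finrank_iSup_pow_le_card [DecidableEq M] (b : Basis M K A)
    (hb0 : b 0 = 1) (hb : ∀ m m', ∃ c : Kˣ, b m * b m' = (c : K) • b (m + m'))
    {V : Submodule K A} (hV : V.FG) :
    ∃ F : Finset M, ∀ n : ℕ, finrank K ↥(⨆ i ∈ Finset.range (n + 1), V ^ i) ≤ (n • F).card := by
  obtain ⟨F, hF⟩ := b.exists_finset_le_span_image hV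
  have hVF : V ≤ span K (b '' ↑(insert 0 F)) :=
    hF.trans (span_mono (Set.image_mono (Finset.coe_subset.2 (Finset.subset_insert 0 F))))
  refine ⟨insert 0 F, fun n => ?_⟩
  have hle : ⨆ i ∈ Finset.range (n + 1), V ^ i ≤ span K (b '' ↑(n • insert 0 F)) := by
    rw [← iSup_pow_span_image_eq hb0 hb (Finset.mem_insert_self 0 F)]
    exact iSup₂_mono fun i _ => pow_le_pow_left' hVF i
  have : FiniteDimensional K (span K (b '' ↑(n • insert 0 F))) :=
    FiniteDimensional.span_of_finite K ((n • insert 0 F).finite_toSet.image b)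
  exact (finrank_mono hle).trans (finrank_span_image_finset b.linearIndependent _).le

end MonomialBasis

theorem gkdim_eq_of_card_nsmul {K A M : Type*} [Field K] [Ring A] [Algebra K A]
    [AddCommMonoid M] [DecidableEq M] (b : Basis M K A) (hb0 : b 0 = 1)
    (hb : ∀ m m', ∃ c : Kˣ, b m * b m' = (c : K) • b (m + m')) {d : ℕ}
    (hup : ∀ F : Finset M, ∃ C : ℝ, 1 ≤ C ∧ ∀ᶠ n : ℕ in atTop, ((n • F).card : ℝ) ≤ C * n ^ d)
    {F₀ : Finset M} (h0 : 0 ∈ F₀) (hF₀ : AddSubmonoid.closure (F₀ : Set M) = ⊤)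
    (hlow : ∃ c : ℝ, 0 < c ∧ ∀ n : ℕ, c * n ^ d ≤ (n • F₀).card) :
    GKdim K A = d := by
  obtain ⟨c, hc, hcF₀⟩ := hlow
  obtain ⟨C₀, hC₀, hC₀F₀⟩ := hup F₀
  unfold GKdim
  apply IsGreatest.csSup_eq
  constructor
  · refine ⟨span K (b '' F₀), fg_span (F₀.finite_toSet.image b),
      adjoin_span_image_eq_top hb0 hb b.span_eq hF₀, ?_⟩
    simp only [finrank_iSup_pow_span_image hb0 hb b.linearIndependent h0]
    exact (tendsto_log_div_log_of_bounds hc hC₀ hcF₀ hC₀F₀).limsup_eq.symm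
  · rintro _ ⟨V, hV, -, rfl⟩
    obtain ⟨F, hF⟩ := b.exists_finrank_iSup_pow_le_card hb0 hb hV
    obtain ⟨C, hC, hCF⟩ := hup F
    exact limsup_log_div_log_le hC (hCF.mono fun n hn => le_trans (by exact_mod_cast hF n) hn)

theorem finrank_addSubgroupClosure {G : Type*} [AddCommGroup G] (s : Set G) :
    finrank ℤ (AddSubgroup.closure s) = finrank ℤ (span ℤ s) :=
  (AddEquiv.addSubgroupCongr (span_int_eq_addSubgroupClosure s).symm).toIntLinearEquiv.finrank_eq

theorem exists_linearIndependent_fin_finrank_span {ι : Type*} [Finite ι] (s : Set (ι → ℤ)) :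
    ∃ v : Fin (finrank ℤ (span ℤ s)) → ι → ℤ, (∀ j, v j ∈ s) ∧ LinearIndependent ℤ v := by
  -- over `ℚ` a spanning family contains a basis, and `ℚ`-rank equals `ℤ`-rank
  set c : (ι → ℤ) →ₗ[ℤ] ι → ℚ := (Algebra.linearMap ℤ ℚ).compLeft ι
  have hc : Function.Injective c := Int.cast_injective.comp_left
  obtain ⟨κ, a, -, hspan, hind⟩ := exists_linearIndependent' ℚ (c ∘ ((↑) : s → ι → ℤ))
  have : Fintype κ := have := hind.finite; Fintype.ofFinite κ
  have : Module.Finite ℤ (span ℤ (c '' s)) := by rw [← map_span]; infer_instance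
  have hd : Fintype.card κ = finrank ℤ (span ℤ s) := by
    rw [← finrank_span_eq_card hind, hspan, Set.range_comp, Subtype.range_coe,
      finrank_span_eq_finrank_span ℤ, ← map_span, (equivMapOfInjective c hc _).finrank_eq]
  obtain e := (Fintype.equivFinOfCardEq hd).symm
  exact ⟨fun j => a (e j), fun j => (a (e j)).2,
    ((hind.comp e e.injective).restrict_scalars' ℤ).of_comp c⟩

theorem LinearIndependent.injective_sum_nsmul {ι G : Type*} [Fintype ι] [AddCommGroup G]
    {v : ι → G} (hv : LinearIndependent ℤ v) :
    Function.Injective fun a : ι → ℕ => ∑ j, a j • v j := by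
  intro a a' h
  have hz := Fintype.linearIndependent_iff.1 hv (fun j => (a j : ℤ) - a' j) (by
    simp only [sub_smul, Finset.sum_sub_distrib, natCast_zsmul]
    exact sub_eq_zero.2 h)
  funext j
  exact_mod_cast sub_eq_zero.1 (hz j)

theorem Subalgebra.exists_basis_of_toSubmodule_eq_span {K T ι : Type*} [Field K] [Ring T]
    [Algebra K T] {x : ι → T} (hx : LinearIndependent K x) {s : Set ι} {S : Subalgebra K T}
    (hS : Subalgebra.toSubmodule S = span K (x '' s)) :
    ∃ b : Basis s K S, ∀ i, (b i : T) = x i := by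
  have hli : LinearIndependent K (x ∘ (↑) : s → T) := hx.comp _ Subtype.val_injective
  have hrange : span K (Set.range (x ∘ (↑) : s → T)) = Subalgebra.toSubmodule S := by
    rw [hS, Set.range_comp, Subtype.range_coe]
  refine ⟨(Basis.span hli).map (LinearEquiv.ofEq _ _ hrange), fun i => ?_⟩
  simp only [Basis.map_apply, Basis.span_apply, Function.comp_apply]
  exact LinearEquiv.coe_ofEq_apply hrange _

theorem gkdim_monomial_subalgebra_general
    (K T : Type*) [Field K] [Ring T] [Algebra K T]
    (s : Kˣ) (r : ℕ) (Q : Fin r → Fin r → ℤ)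
    (x : (Fin r → ℤ) → T) (hx0 : x 0 = 1)
    (hmul : ∀ k k' : Fin r → ℤ, x k * x k' =
      ((s ^ (∑ i, ∑ j, Q i j * k i * k' j) : Kˣ) : K) • x (k + k'))
    (hindep : LinearIndependent K x)
    (Λ : AddSubmonoid (Fin r → ℤ)) (hΛ : Λ.FG)
    (S : Subalgebra K T)
    (hS : Subalgebra.toSubmodule S = Submodule.span K (x '' (Λ : Set (Fin r → ℤ)))) :
    GKdim K S =
      (Module.finrank ℤ ↥(AddSubgroup.closure (Λ : Set (Fin r → ℤ))) : ℝ) := by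
  classical
  obtain ⟨b, hb⟩ : ∃ b : Basis Λ K S, ∀ l, (b l : T) = x l :=
    Subalgebra.exists_basis_of_toSubmodule_eq_span hindep hS
  have hb0 : b 0 = 1 := Subtype.ext ((hb 0).trans hx0)
  have hbmul : ∀ l l', ∃ c : Kˣ, b l * b l' = (c : K) • b (l + l') := fun l l' =>
    ⟨_, Subtype.ext (by simp only [Subalgebra.coe_mul, Subalgebra.coe_smul, hb]; exact hmul l l')⟩
  set N := span ℤ (Λ : Set (Fin r → ℤ))
  let φ : Λ →+ (Fin (finrank ℤ N) → ℤ) :=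
    (Module.finBasis ℤ N).equivFun.toAddMonoidHom.comp
      (AddSubmonoid.inclusion fun _ hl => subset_span hl)
  have hφ : Function.Injective φ :=
    (Module.finBasis ℤ N).equivFun.injective.comp (AddSubmonoid.inclusion_injective _)
  obtain ⟨v, hvΛ, hv⟩ := exists_linearIndependent_fin_finrank_span (Λ : Set (Fin r → ℤ))
  obtain ⟨F, hF⟩ := AddMonoid.fg_def.1 ((AddMonoid.fg_iff_addSubmonoid_fg Λ).2 hΛ)
  have hF₀ : AddSubmonoid.closure ((insert 0 F : Finset Λ) : Set Λ) = ⊤ :=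
    top_unique (hF ▸ AddSubmonoid.closure_mono (by simp))
  rw [finrank_addSubgroupClosure]
  refine gkdim_eq_of_card_nsmul b hb0 hbmul (fun F' => ?_) (F.mem_insert_self 0) hF₀ ?_
  · simpa using Finset.card_nsmul_le_of_injective φ hφ F'
  · simpa using Finset.le_card_nsmul_of_injective (fun j => (⟨v j, hvΛ j⟩ : Λ))
      (fun a a' h => hv.injective_sum_nsmul (by simpa using congrArg Subtype.val h))
      (F.mem_insert_self 0) (fun j => hF₀ ▸ AddSubmonoid.mem_top _)

/-- The GK dimension of the monomial subalgebra `A(Q;Λ)` of a quantum torus over a field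
equals the rank of the subgroup of `ℤ^r` generated by `Λ`. -/
theorem gkdim_monomial_subalgebra
    (K T : Type*) [Field K] [Ring T] [Algebra K T]
    (s : Kˣ) (r : ℕ) (Q : Fin r → Fin r → ℤ) (hQ : ∀ i j, Q j i = -Q i j)
    (x : (Fin r → ℤ) → T) (hx0 : x 0 = 1)
    (hmul : ∀ k k' : Fin r → ℤ, x k * x k' =
      ((s ^ (∑ i, ∑ j, Q i j * k i * k' j) : Kˣ) : K) • x (k + k'))
    (hindep : LinearIndependent K x)
    (Λ : AddSubmonoid (Fin r → ℤ)) (hΛ : Λ.FG)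
    (S : Subalgebra K T)
    (hS : Subalgebra.toSubmodule S = Submodule.span K (x '' (Λ : Set (Fin r → ℤ)))) :
    GKdim K S =
      (Module.finrank ℤ ↥(AddSubgroup.closure (Λ : Set (Fin r → ℤ))) : ℝ) :=
  gkdim_monomial_subalgebra_general K T s r Q x hx0 hmul hindep Λ hΛ S hS
end
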